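/- arXiv:2605.28408 — 2 statements merged into one kernel-verified Lean document; each statement's English description precedes it below -/
import Mathlib

section
/- Least element principle: let M satisfy the base axioms, let P : M → Prop, and suppose M satisfies the comprehension principle for P. If there exists d with P_k(d) and P(d), then there exists d with P_k(d) and P(d) such that ¬P(d') for every d' < d with P_k(d'). -/
/-!
Code the predicate below the position `D = k • d₀` by the number `x < D` given by comprehension;
its digit at `d₀` is `1`, so `x > 0`. The position `d = V x` of the lowest nonzero digit of `x` is
the least position where `P` holds: the digit of `x` there is not `0`, hence `1`, so `P d`; and a
position `d' < d` with `P d'` would carry the digit `1`, forcing `V x ≤ d'`.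
-/

/-- The base axioms for a Büchi-arithmetic-like structure `M` with distinguished
element `one` and function `V`, over the base `k`. -/
structure BuchiAxioms (k : ℕ) (M : Type*) [AddCancelCommMonoid M] [LinearOrder M]
    (one : M) (V : M → M) : Prop where
  transl : ∀ x y z : M, x ≤ y ↔ x + z ≤ y + z
  one_pos : (0 : M) < one
  discrete : ∀ x y : M, x < y → x + one ≤ y
  ord0 : ∀ x : M, 0 ≤ x
  ord1 : ∀ x y : M, x ≤ y ↔ ∃ z ≤ y, z + x = y
  mod : ∀ x : M, ∃ a : ℕ, a < k ∧ ∃ z : M, x = a • one + k • z ∨ a • one = x + k • z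
  v0 : V 0 = 0 ∧ V one = one
  v1 : (∀ x : M, V (k • x) = k • V x) ∧
    ∀ (d : M) (a : ℕ), (0 < d ∧ V d = d) → 1 ≤ a → a < k → V (a • d) = d
  v2 : ∀ x y : M, 0 < x → 0 < y → V x < V y → V (x + y) = V x
  v3 : ∀ x : M, 0 < x → ∃ y ≤ x, ∃ a : ℕ, 1 ≤ a ∧ a < k ∧
    x = y + a • V x ∧ (V x < V y ∨ y = 0)
  v4 : ∀ x : M, 0 < x → ∃ d : M, (0 < d ∧ V d = d) ∧ d ≤ x ∧ x < k • d
  v5 : ∀ x : M, V (V x) = V x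

/-- `(x)_d = a` : the digit of `x` at position `d` (a power of `k`) equals `a`. -/
def DigitEq {M : Type*} [AddCancelCommMonoid M] [LinearOrder M]
    (V : M → M) (x d : M) (a : ℕ) : Prop :=
  (0 < d ∧ V d = d) ∧ ∃ y < d, ∃ z ≤ x, x = y + a • d + z ∧ (z = 0 ∨ d < V z)

/-- The comprehension principle for a predicate `P` on `M`. -/
def Comprehension {M : Type*} [AddCancelCommMonoid M] [LinearOrder M]
    (V : M → M) (P : M → Prop) : Prop :=
  ∀ d : M, (0 < d ∧ V d = d) → ∃ x < d, ∀ d' < d, (0 < d' ∧ V d' = d') →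
    (DigitEq V x d' 1 ∧ P d') ∨ (DigitEq V x d' 0 ∧ ¬ P d')

namespace BuchiAxioms

variable {k : ℕ} {M : Type*} [AddCancelCommMonoid M] [LinearOrder M] {one : M} {V : M → M}
  {x y z d : M}

theorem isOrderedCancelAddMonoid (H : BuchiAxioms k M one V) : IsOrderedCancelAddMonoid M where
  add_le_add_left a b h c := (H.transl a b c).1 h
  le_of_add_le_add_left a b c h := by
    rw [add_comm a, add_comm a] at h
    exact (H.transl b c a).2 h

theorem canonicallyOrderedAdd (H : BuchiAxioms k M one V) : CanonicallyOrderedAdd M where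
  exists_add_of_le h := by
    obtain ⟨z, -, hz⟩ := (H.ord1 _ _).1 h
    exact ⟨z, by rw [← hz, add_comm]⟩
  le_add_self a b := by simpa using (H.transl 0 b a).1 (H.ord0 b)
  le_self_add a b := by simpa [add_comm] using (H.transl 0 b a).1 (H.ord0 b)

theorem V_le (H : BuchiAxioms k M one V) (hx : 0 < x) : V x ≤ x := by
  have := H.canonicallyOrderedAdd
  obtain ⟨y, -, a, ha, -, hxy, -⟩ := H.v3 x hx
  obtain ⟨b, rfl⟩ := Nat.exists_eq_add_of_le ha
  calc V x ≤ y + (V x + b • V x) := le_self_add.trans le_add_self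
    _ = x := by rw [add_nsmul, one_nsmul] at hxy; exact hxy.symm

theorem V_pos (H : BuchiAxioms k M one V) (hx : 0 < x) : 0 < V x := by
  have := H.canonicallyOrderedAdd
  refine pos_iff_ne_zero.2 fun hV => ?_
  obtain ⟨y, -, a, -, -, hxy, hy⟩ := H.v3 x hx
  rw [hV, smul_zero, add_zero] at hxy
  subst hxy
  rcases hy with hy | rfl
  · exact lt_irrefl _ hy
  · exact hx.ne rfl

theorem V_add_of_V_lt (H : BuchiAxioms k M one V) (hx : 0 < x) (hz : z = 0 ∨ V x < V z) :
    V (x + z) = V x := by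
  have := H.canonicallyOrderedAdd
  rcases hz with rfl | hz
  · rw [add_zero]
  · have hz0 : 0 < z := pos_iff_ne_zero.2 fun h => by simp [h, H.v0.1] at hz
    exact H.v2 x z hx hz0 hz

theorem V_add_le_of_lt (H : BuchiAxioms k M one V) (hd : 0 < d ∧ V d = d) (hy : y < d) :
    V (y + d) ≤ d := by
  have := H.canonicallyOrderedAdd
  rcases (H.ord0 y).eq_or_lt with rfl | hy0
  · rw [zero_add, hd.2]
  · have hVy : V y < d := (H.V_le hy0).trans_lt hy
    rw [H.v2 y d hy0 hd.1 (hd.2.symm ▸ hVy)]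
    exact hVy.le

theorem V_le_of_digitEq_one (H : BuchiAxioms k M one V) (h : DigitEq V x d 1) : V x ≤ d := by
  have := H.canonicallyOrderedAdd
  obtain ⟨hd, y, hy, z, -, rfl, hz⟩ := h
  have hyd : 0 < y + d := hd.1.trans_le le_add_self
  have hVyd := H.V_add_le_of_lt hd hy
  rw [one_nsmul, H.V_add_of_V_lt hyd (hz.imp_right hVyd.trans_lt)]
  exact hVyd

theorem pos_of_digitEq_one (H : BuchiAxioms k M one V) (h : DigitEq V x d 1) : 0 < x := by
  have := H.canonicallyOrderedAdd
  obtain ⟨hd, y, -, z, -, rfl, -⟩ := h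
  rw [one_nsmul]
  exact hd.1.trans_le (le_add_self.trans le_self_add)

theorem not_digitEq_V_zero (H : BuchiAxioms k M one V) (hx : 0 < x) :
    ¬ DigitEq V x (V x) 0 := by
  have := H.canonicallyOrderedAdd
  rintro ⟨-, y, hy, z, -, hxyz, hz⟩
  rw [zero_nsmul, add_zero] at hxyz
  rcases (H.ord0 y).eq_or_lt with rfl | hy0
  · rw [zero_add] at hxyz
    subst hxyz
    rcases hz with rfl | hz
    · exact hx.ne rfl
    · exact hz.false
  · have hVy : V y < V x := (H.V_le hy0).trans_lt hy
    have hVxy : V x = V y := hxyz ▸ H.V_add_of_V_lt hy0 (hz.imp_right hVy.trans)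
    exact hVy.ne hVxy.symm

end BuchiAxioms

/-- Least element principle for powers of `k`. -/
theorem stmt9 (k : ℕ) (hk : 2 ≤ k) (M : Type*) [AddCancelCommMonoid M] [LinearOrder M]
    (one : M) (V : M → M) (H : BuchiAxioms k M one V)
    (P : M → Prop) (hC : Comprehension V P) :
    (∃ d : M, (0 < d ∧ V d = d) ∧ P d) →
      ∃ d : M, (0 < d ∧ V d = d) ∧ P d ∧ ∀ d' < d, (0 < d' ∧ V d' = d') → ¬ P d' := by
  rintro ⟨d₀, hd₀, hPd₀⟩
  have := H.isOrderedCancelAddMonoid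
  have hd₀D : d₀ < k • d₀ := by simpa using nsmul_lt_nsmul_left hd₀.1 (by omega : 1 < k)
  obtain ⟨x, hxD, hx⟩ := hC (k • d₀) ⟨hd₀.1.trans hd₀D, by rw [H.v1.1, hd₀.2]⟩
  have hx0 : 0 < x :=
    H.pos_of_digitEq_one ((hx d₀ hd₀D hd₀).resolve_right fun h => h.2 hPd₀).1
  have hVxD : V x < k • d₀ := (H.V_le hx0).trans_lt hxD
  refine ⟨V x, ⟨H.V_pos hx0, H.v5 x⟩, ?_, ?_⟩
  · exact ((hx _ hVxD ⟨H.V_pos hx0, H.v5 x⟩).resolve_right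
      fun h => H.not_digitEq_V_zero hx0 h.1).2
  · intro d' hd' hd'pow hPd'
    obtain ⟨h1, -⟩ := (hx d' (hd'.trans hVxD) hd'pow).resolve_right fun h => h.2 hPd'
    exact (H.V_le_of_digitEq_one h1).not_gt hd'
end

section
/- Let A_V be the automaton over Σ_k^2 with states {q₀, q₁, s}, initial state q₀, and transitions: (q₀, (0, 0), q₀); (q₀, (a, 1), q₁) for every a ∈ {1,…,k−1}; (q₁, (a, 0), q₁) for every a ∈ {0,…,k−1}; and all remaining letter–state pairs lead to the sink s (including (s, ·, s)). Then for all x, y, n ∈ ℕ: (x mod k^n = 0 and y mod k^n = 0) if and only if W_{A_V,q₀}(x, y, n); and V_k(x mod k^n) = y mod k^n if and only if (W_{A_V,q₀}(x, y, n) or W_{A_V,q₁}(x, y, n)). -/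
/-- The `i`-th base-`k` digit of `x`. -/
def digit (k x i : ℕ) : ℕ := x / k ^ i % k

/-- A finite automaton over the alphabet `Σ_k^m = (Fin k)^m`. -/
structure FA (k m : ℕ) where
  Q : Type
  fin : Finite Q
  q0 : Q
  acc : Set Q
  δ : Set (Q × (Fin m → Fin k) × Q)

/-- The run predicate `W_{A,q₁}(x⃗, n)`: the automaton `A` can reach state `q₁`
after reading the first `n` base-`k` digits of `x⃗`, the run being encoded by a
family `(w_q)` of natural numbers. -/
def FA.W {k m : ℕ} (A : FA k m) (q1 : A.Q) (x : Fin m → ℕ) (n : ℕ) : Prop :=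
  ∃ w : A.Q → ℕ,
    (∀ q, w q < k ^ (n + 1)) ∧
    (∀ i ≤ n, ∃ q, digit k (w q) i = 1 ∧ ∀ q' ≠ q, digit k (w q') i = 0) ∧
    digit k (w A.q0) 0 = 1 ∧ digit k (w q1) n = 1 ∧
    ∀ i < n, ∀ q, digit k (w q) i = 1 →
      ∃ a : Fin m → Fin k, ∃ q', (q, a, q') ∈ A.δ ∧ digit k (w q') (i + 1) = 1 ∧
        ∀ j, digit k (x j) i = (a j : ℕ)

/-- `V_k(x)`: the largest power of `k` dividing `x` (with `V_k(0) = 0`). -/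
def Vk (k x : ℕ) : ℕ :=
  if x = 0 then 0 else k ^ Nat.findGreatest (fun n => k ^ n ∣ x) x

/-- The automaton `A_V` recognizing `V_k(x) = y`: states `q₀ = 0`, `q₁ = 1` and a
sink `s = 2`; transitions `(q₀,(0,0),q₀)`, `(q₀,(a,1),q₁)` for `a ≥ 1`,
`(q₁,(a,0),q₁)`, and all remaining letter–state pairs go to the sink. -/
def AV (k : ℕ) : FA k 2 where
  Q := Fin 3
  fin := inferInstance
  q0 := 0
  acc := {0, 1}
  δ := {t | (t.1 = 0 ∧ ((t.2.1 0 : ℕ) = 0 ∧ (t.2.1 1 : ℕ) = 0) ∧ t.2.2 = 0) ∨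
            (t.1 = 0 ∧ (1 ≤ (t.2.1 0 : ℕ) ∧ (t.2.1 1 : ℕ) = 1) ∧ t.2.2 = 1) ∨
            (t.1 = 1 ∧ (t.2.1 1 : ℕ) = 0 ∧ t.2.2 = 1) ∨
            (t.1 = 0 ∧ ¬((t.2.1 0 : ℕ) = 0 ∧ (t.2.1 1 : ℕ) = 0) ∧
              ¬(1 ≤ (t.2.1 0 : ℕ) ∧ (t.2.1 1 : ℕ) = 1) ∧ t.2.2 = 2) ∨
            (t.1 = 1 ∧ (t.2.1 1 : ℕ) ≠ 0 ∧ t.2.2 = 2) ∨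
            (t.1 = 2 ∧ t.2.2 = 2)}

/-!
Since the transition relation of `A_V` is the graph of a function `avStep`, the run of `A_V`
on `(x, y)` is unique, and a witness `(w_q)` of `W` is the base-`k` encoding of the set of
times the run is in `q`. By induction on `n`, the run is in `q₀` iff `x ≡ y ≡ 0 mod k^n`, and
in `q₁` iff `x mod k^n ≠ 0` and `y mod k^n = V_k(x mod k^n)`: the digit `d` of `x` at position
`n` leaves `V_k(x mod k^n)` unchanged once `x mod k^n ≠ 0`, and makes it `k^n` if
`x mod k^n = 0 ≠ d`.
-/

open Finset

section Digits

variable {k : ℕ}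

theorem digit_lt (hk : 0 < k) (x i : ℕ) : digit k x i < k := Nat.mod_lt _ hk

theorem mod_pow_succ_eq_add_digit (x n : ℕ) : x % k ^ (n + 1) = x % k ^ n + k ^ n * digit k x n :=
  Nat.mod_pow_succ

theorem digit_eq_mod_pow_succ_div (x i : ℕ) : digit k x i = x % k ^ (i + 1) / k ^ i := by
  rw [pow_succ, Nat.mod_mul_right_div_self]; rfl

theorem digit_add_pow_mul_of_lt {i n : ℕ} (h : i < n) (a c : ℕ) :
    digit k (a + k ^ n * c) i = digit k a i := by
  rw [digit_eq_mod_pow_succ_div, digit_eq_mod_pow_succ_div, ← pow_mul_pow_sub k h, mul_assoc,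
    Nat.add_mul_mod_self_left]

theorem digit_add_pow_mul_self (hk : 0 < k) {a c n : ℕ} (ha : a < k ^ n) (hc : c < k) :
    digit k (a + k ^ n * c) n = c := by
  rw [digit, Nat.add_mul_div_left _ _ (pow_pos hk n), Nat.div_eq_of_lt ha, zero_add,
    Nat.mod_eq_of_lt hc]

theorem sum_pow_mul_lt (hk : 0 < k) {f : ℕ → ℕ} (hf : ∀ j, f j < k) (m : ℕ) :
    ∑ j ∈ range m, k ^ j * f j < k ^ m := by
  induction m with
  | zero => simp
  | succ m ih =>
    rw [sum_range_succ, pow_succ]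
    nlinarith [hf m, pow_pos hk m]

theorem digit_sum_pow_mul (hk : 0 < k) {f : ℕ → ℕ} (hf : ∀ j, f j < k) {i m : ℕ}
    (hi : i < m) : digit k (∑ j ∈ range m, k ^ j * f j) i = f i := by
  induction m with
  | zero => exact absurd hi (Nat.not_lt_zero i)
  | succ m ih =>
    rw [sum_range_succ]
    rcases Nat.lt_succ_iff_lt_or_eq.1 hi with hi | rfl
    · rw [digit_add_pow_mul_of_lt hi, ih hi]
    · exact digit_add_pow_mul_self hk (sum_pow_mul_lt hk hf i) (hf i)

theorem add_mul_eq_add_mul_iff {K a b c e : ℕ} (ha : a < K) (hb : b < K) :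
    a + K * c = b + K * e ↔ a = b ∧ c = e := by
  refine ⟨fun h => ?_, fun ⟨hab, hce⟩ => hab ▸ hce ▸ rfl⟩
  have hK : 0 < K := Nat.zero_lt_of_lt ha
  obtain ⟨hc, ha'⟩ := (Nat.div_mod_unique hK).2 ⟨h, ha⟩
  obtain ⟨he, hb'⟩ := (Nat.div_mod_unique hK).2 ⟨rfl, hb⟩
  exact ⟨ha'.symm.trans hb', hc.symm.trans he⟩

end Digits

namespace FA

variable {k m : ℕ} (A : FA k m)

def HasTransitionFunction (f : A.Q → (Fin m → ℕ) → A.Q) : Prop :=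
  ∀ q a q', (q, a, q') ∈ A.δ ↔ q' = f q fun j => (a j : ℕ)

def run (f : A.Q → (Fin m → ℕ) → A.Q) (x : Fin m → ℕ) : ℕ → A.Q
  | 0 => A.q0
  | i + 1 => f (run f x i) fun j => digit k (x j) i

variable {A} {f : A.Q → (Fin m → ℕ) → A.Q}

theorem W.run_eq (hf : A.HasTransitionFunction f) {q₁ : A.Q} {x : Fin m → ℕ} {n : ℕ}
    (h : A.W q₁ x n) : A.run f x n = q₁ := by
  obtain ⟨w, -, hunique, h0, hn, hstep⟩ := h
  have hrun : ∀ i ≤ n, digit k (w (A.run f x i)) i = 1 := by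
    intro i hi
    induction i with
    | zero => exact h0
    | succ i ih =>
      obtain ⟨a, q', hq', hdigit, ha⟩ := hstep i hi _ (ih (by omega))
      have hletter : (fun j => (a j : ℕ)) = fun j => digit k (x j) i :=
        funext fun j => (ha j).symm
      rwa [run, ← hletter, ← (hf _ _ _).1 hq']
  obtain ⟨q, -, hq⟩ := hunique n le_rfl
  have hone : ∀ q', digit k (w q') n = 1 → q' = q := fun q' h' => by
    by_contra hne
    simp [hq q' hne] at h'
  exact (hone _ (hrun n le_rfl)).trans (hone _ hn).symm

theorem W_of_run_eq (hk : 1 < k) (hf : A.HasTransitionFunction f) {q₁ : A.Q} {x : Fin m → ℕ}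
    {n : ℕ} (h : A.run f x n = q₁) : A.W q₁ x n := by
  classical
  have hind : ∀ q j, (if A.run f x j = q then 1 else 0) < k := fun q j => by split_ifs <;> omega
  set w : A.Q → ℕ := fun q => ∑ j ∈ range (n + 1), k ^ j * if A.run f x j = q then 1 else 0
  have hw : ∀ q, ∀ i ≤ n, digit k (w q) i = if A.run f x i = q then 1 else 0 :=
    fun q i hi => digit_sum_pow_mul (by omega) (hind q) (Nat.lt_succ_of_le hi)
  refine ⟨w, fun q => sum_pow_mul_lt (by omega) (hind q) _, fun i hi => ⟨A.run f x i, ?_, ?_⟩,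
    by simp [hw _ 0 (Nat.zero_le n), run], by simp [hw _ n le_rfl, h], fun i hi q hq => ?_⟩
  · simp [hw _ i hi]
  · intro q' hq'
    simp [hw _ i hi, Ne.symm hq']
  · have hq : A.run f x i = q := by simpa [hw q i hi.le] using hq
    refine ⟨fun j => ⟨digit k (x j) i, digit_lt (by omega) _ _⟩, A.run f x (i + 1), ?_,
      by simp [hw _ (i + 1) hi], fun j => rfl⟩
    rw [hf, ← hq]
    rfl

theorem W_iff_run_eq (hk : 1 < k) (hf : A.HasTransitionFunction f) (q₁ : A.Q) (x : Fin m → ℕ)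
    (n : ℕ) : A.W q₁ x n ↔ A.run f x n = q₁ :=
  ⟨W.run_eq hf, W_of_run_eq hk hf⟩

end FA

section Valuation

variable {k : ℕ}

theorem Vk_zero : Vk k 0 = 0 := if_pos rfl

theorem Vk_eq_pow (hk : 1 < k) {x j : ℕ} (hx : x ≠ 0) (h1 : k ^ j ∣ x)
    (h2 : ¬k ^ (j + 1) ∣ x) : Vk k x = k ^ j := by
  rw [Vk, if_neg hx, Nat.findGreatest_eq_iff.2]
  refine ⟨(Nat.lt_pow_self hk).le.trans (Nat.le_of_dvd (Nat.pos_of_ne_zero hx) h1),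
    fun _ => h1, fun i hi _ hdvd => h2 ((pow_dvd_pow k hi).trans hdvd)⟩

theorem exists_Vk_eq_pow (hk : 1 < k) {x : ℕ} (hx : x ≠ 0) :
    ∃ j, Vk k x = k ^ j ∧ k ^ j ∣ x ∧ ¬k ^ (j + 1) ∣ x := by
  set j := Nat.findGreatest (fun j => k ^ j ∣ x) x
  refine ⟨j, by rw [Vk, if_neg hx],
    Nat.findGreatest_spec (P := fun j => k ^ j ∣ x) (Nat.zero_le x) (by simp), fun h => ?_⟩
  by_cases hjx : j + 1 ≤ x
  · exact Nat.findGreatest_is_greatest (Nat.lt_succ_self j) hjx h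
  · have := Nat.le_of_dvd (Nat.pos_of_ne_zero hx) h
    have := Nat.lt_pow_self (n := j + 1) hk
    omega

theorem Vk_le (hk : 1 < k) (x : ℕ) : Vk k x ≤ x := by
  rcases eq_or_ne x 0 with rfl | hx
  · exact Vk_zero.le
  · obtain ⟨j, hj, hdvd, -⟩ := exists_Vk_eq_pow hk hx
    exact hj ▸ Nat.le_of_dvd (Nat.pos_of_ne_zero hx) hdvd

theorem Vk_pow_mul (hk : 1 < k) (n : ℕ) {d : ℕ} (hd : d ≠ 0) (hdk : d < k) :
    Vk k (k ^ n * d) = k ^ n := by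
  have hkn : 0 < k ^ n := pow_pos (by omega) n
  refine Vk_eq_pow hk (Nat.mul_ne_zero hkn.ne' hd) (dvd_mul_right _ _) fun h => ?_
  rw [pow_succ, Nat.mul_dvd_mul_iff_left hkn] at h
  exact Nat.not_dvd_of_pos_of_lt (Nat.pos_of_ne_zero hd) hdk h

theorem Vk_add_pow_mul (hk : 1 < k) {a n : ℕ} (ha0 : a ≠ 0) (ha : a < k ^ n) (c : ℕ) :
    Vk k (a + k ^ n * c) = Vk k a := by
  obtain ⟨j, hVj, hj, hj1⟩ := exists_Vk_eq_pow hk ha0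
  have hjn : j + 1 ≤ n := (Nat.pow_lt_pow_iff_right (by omega)).1
    ((Nat.le_of_dvd (Nat.pos_of_ne_zero ha0) hj).trans_lt ha)
  have hdvd : ∀ i ≤ n, k ^ i ∣ k ^ n * c := fun i hi => (pow_dvd_pow k hi).mul_right c
  rw [hVj]
  exact Vk_eq_pow hk (by omega) (dvd_add hj (hdvd j (by omega)))
    ((Nat.dvd_add_left (hdvd _ hjn)).not.2 hj1)

end Valuation

section AutomatonV

def avStep (q : Fin 3) (a : Fin 2 → ℕ) : Fin 3 :=
  if q = 0 ∧ a 0 = 0 ∧ a 1 = 0 then 0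
  else if q = 0 ∧ 1 ≤ a 0 ∧ a 1 = 1 ∨ q = 1 ∧ a 1 = 0 then 1
  else 2

theorem avStep_eq_zero_iff (q : Fin 3) (a : Fin 2 → ℕ) :
    avStep q a = 0 ↔ q = 0 ∧ a 0 = 0 ∧ a 1 = 0 := by
  unfold avStep; split_ifs <;> simp_all

theorem avStep_eq_one_iff (q : Fin 3) (a : Fin 2 → ℕ) :
    avStep q a = 1 ↔ q = 0 ∧ 1 ≤ a 0 ∧ a 1 = 1 ∨ q = 1 ∧ a 1 = 0 := by
  unfold avStep; split_ifs <;> simp_all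

theorem AV_hasTransitionFunction (k : ℕ) : (AV k).HasTransitionFunction avStep := by
  intro (q : Fin 3) a (q' : Fin 3)
  show _ ∨ _ ↔ @Eq (Fin 3) _ _
  have hq := q.isLt
  have hq' := q'.isLt
  simp only [avStep]
  split_ifs <;> simp only [Fin.ext_iff, Fin.val_zero, Fin.val_one, Fin.val_two] at * <;> omega

end AutomatonV

def avRun (k x y : ℕ) : ℕ → Fin 3 := (AV k).run avStep ![x, y]

section RunOfAV

variable {k : ℕ} (x y : ℕ)

theorem AV_W_iff_avRun_eq (hk : 1 < k) (q : Fin 3) (n : ℕ) :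
    (AV k).W q ![x, y] n ↔ avRun k x y n = q :=
  FA.W_iff_run_eq hk (AV_hasTransitionFunction k) q ![x, y] n

theorem avRun_succ (n : ℕ) :
    avRun k x y (n + 1) = avStep (avRun k x y n) ![digit k x n, digit k y n] := by
  show avStep (avRun k x y n) (fun j => digit k (![x, y] j) n) = _
  congr 1
  ext j
  fin_cases j <;> rfl

theorem avRun_eq_zero_iff (hk : 0 < k) (n : ℕ) :
    avRun k x y n = 0 ↔ x % k ^ n = 0 ∧ y % k ^ n = 0 := by
  induction n with
  | zero => simp [avRun, FA.run, AV, Nat.mod_one]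
  | succ n ih =>
    rw [avRun_succ, avStep_eq_zero_iff, ih, mod_pow_succ_eq_add_digit x,
      mod_pow_succ_eq_add_digit y]
    simp only [Nat.add_eq_zero_iff, Nat.mul_eq_zero, pow_ne_zero n hk.ne', false_or,
      Matrix.cons_val_zero, Matrix.cons_val_one]
    tauto

theorem avRun_eq_one_iff (hk : 1 < k) (n : ℕ) :
    avRun k x y n = 1 ↔ x % k ^ n ≠ 0 ∧ Vk k (x % k ^ n) = y % k ^ n := by
  induction n with
  | zero => simp [avRun, FA.run, AV, Nat.mod_one]
  | succ n ih =>
    rw [avRun_succ, avStep_eq_one_iff, avRun_eq_zero_iff x y (by omega), ih,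
      mod_pow_succ_eq_add_digit x, mod_pow_succ_eq_add_digit y]
    simp only [Matrix.cons_val_zero, Matrix.cons_val_one]
    have hkn : 0 < k ^ n := pow_pos (by omega) n
    have hx := Nat.mod_lt x hkn
    have hy := Nat.mod_lt y hkn
    have hd := digit_lt (by omega : 0 < k) x n
    set a := x % k ^ n
    set b := y % k ^ n
    set d := digit k x n
    set e := digit k y n
    rcases eq_or_ne a 0 with ha | ha
    · have hsplit := add_mul_eq_add_mul_iff (c := 1) (e := e) hkn hy
      rw [zero_add, mul_one] at hsplit
      rcases eq_or_ne d 0 with hd0 | hd0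
      · simp [ha, hd0]
      · have hkd : k ^ n * d ≠ 0 := Nat.mul_ne_zero hkn.ne' hd0
        rw [ha, zero_add, Vk_pow_mul hk n hd0 hd, hsplit]
        omega
    · have hsplit := add_mul_eq_add_mul_iff (c := 0) (e := e) ((Vk_le hk a).trans_lt hx) hy
      rw [mul_zero, add_zero] at hsplit
      have hxd : a + k ^ n * d ≠ 0 := fun h => ha (Nat.eq_zero_of_add_eq_zero_right h)
      rw [Vk_add_pow_mul hk ha hx, hsplit]
      omega

end RunOfAV

/-- `A_V` computes `V_k` on residues modulo `k^n`: state `q₀` is reached iff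
`x ≡ 0` and `y ≡ 0`, and `V_k(x mod k^n) = y mod k^n` iff state `q₀` or `q₁`
is reached. -/
theorem stmt18 (k : ℕ) (hk : 2 ≤ k) :
    ∀ x y n : ℕ,
      ((x % k ^ n = 0 ∧ y % k ^ n = 0) ↔ (AV k).W (0 : Fin 3) ![x, y] n) ∧
      (Vk k (x % k ^ n) = y % k ^ n ↔
        ((AV k).W (0 : Fin 3) ![x, y] n ∨ (AV k).W (1 : Fin 3) ![x, y] n)) := by
  intro x y n
  rw [AV_W_iff_avRun_eq x y hk, AV_W_iff_avRun_eq x y hk, avRun_eq_zero_iff x y (by omega),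
    avRun_eq_one_iff x y hk]
  refine ⟨Iff.rfl, ?_⟩
  by_cases hx : x % k ^ n = 0
  · simp [hx, Vk_zero, eq_comm]
  · simp [hx]
end
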